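/- Let 𝒢 be a torsion class in mod-Λ and θ a stability condition. Every object M of 𝒫̄(θ) has a unique strict subobject M₀ lying in 𝒫(θ) such that M/M₀ lies in 𝒲(θ). Consequently 𝒫(θ)⟂ ∩ 𝒫̄(θ) = 𝒲(θ), and 𝒫̄(θ) is the pseudo-torsion class generated by 𝒫(θ) and 𝒲(θ). -/

import Mathlib

/-!
Common framework: a torsion class `𝒢` in `mod-Λ` is modelled as a predicate
`G : ModuleCat R → Prop` (closed under isomorphism, quotients and extensions).
Strict subobjects, fibrations, cofibrations, strict morphisms, pseudo-torsion
classes etc. follow the definitions of the paper.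
-/

namespace PaperTC

variable {R : Type} [Ring R]

/-- Membership of a (type-level) module in a class of modules. -/
def Mem (G : ModuleCat.{0} R → Prop) (M : Type) [AddCommGroup M] [Module R M] : Prop :=
  G (ModuleCat.of R M)

/-- `A` is a strict subobject of `M` (w.r.t. the torsion class `G`):
`A` lies in `G` and `A ⊓ B'` lies in `G` for every subobject `B'` of `M`. -/
def IsStrictSub (G : ModuleCat.{0} R → Prop) {M : Type} [AddCommGroup M] [Module R M]
    (A : Submodule R M) : Prop :=
  Mem G ↥A ∧ ∀ B' : Submodule R M, Mem G ↥B' → Mem G ↥(A ⊓ B')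

/-- A fibration is a surjection whose kernel is a strict subobject of the source. -/
def IsFibration (G : ModuleCat.{0} R → Prop) {M N : Type} [AddCommGroup M] [Module R M]
    [AddCommGroup N] [Module R N] (f : M →ₗ[R] N) : Prop :=
  Function.Surjective f ∧ IsStrictSub G (LinearMap.ker f)

/-- A strict morphism: kernel is a strict subobject of the source and image a
strict subobject of the target. -/
def IsStrictMorphism (G : ModuleCat.{0} R → Prop) {M N : Type} [AddCommGroup M] [Module R M]
    [AddCommGroup N] [Module R N] (f : M →ₗ[R] N) : Prop :=
  IsStrictSub G (LinearMap.ker f) ∧ IsStrictSub G (LinearMap.range f)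

/-- `G` is a torsion class in `mod-Λ`. -/
structure IsTorsionClass (G : ModuleCat.{0} R → Prop) : Prop where
  iso_closed : ∀ (M N : Type) [AddCommGroup M] [Module R M] [AddCommGroup N] [Module R N],
      (M ≃ₗ[R] N) → Mem G M → Mem G N
  zero_mem : ∀ (M : Type) [AddCommGroup M] [Module R M], Subsingleton M → Mem G M
  quot_closed : ∀ (M : Type) [AddCommGroup M] [Module R M] (N : Submodule R M),
      Mem G M → Mem G (M ⧸ N)
  ext_closed : ∀ (A B C : Type) [AddCommGroup A] [Module R A] [AddCommGroup B] [Module R B]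
      [AddCommGroup C] [Module R C] (f : A →ₗ[R] B) (g : B →ₗ[R] C),
      Function.Injective f → Function.Surjective g →
      LinearMap.range f = LinearMap.ker g → Mem G A → Mem G C → Mem G B

/-- A pseudo-torsion class `P` in the torsion class `G`: nonempty (contains zero
objects), closed under strict quotients and under strict extensions. -/
structure IsPseudoTorsionClass (G P : ModuleCat.{0} R → Prop) : Prop where
  subset : ∀ M : ModuleCat.{0} R, P M → G M
  zero_mem : ∀ (M : Type) [AddCommGroup M] [Module R M], Subsingleton M → Mem G M → Mem P M
  quot_closed : ∀ (M : Type) [AddCommGroup M] [Module R M] (A : Submodule R M),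
      IsStrictSub G A → Mem P M → Mem P (M ⧸ A)
  ext_closed : ∀ (A B C : Type) [AddCommGroup A] [Module R A] [AddCommGroup B] [Module R B]
      [AddCommGroup C] [Module R C] (f : A →ₗ[R] B) (g : B →ₗ[R] C),
      Function.Injective f → Function.Surjective g →
      LinearMap.range f = LinearMap.ker g → IsStrictSub G (LinearMap.range f) →
      Mem P A → Mem P C → Mem P B

/-- A pseudo-torsionfree class `Q` in the torsion class `G`. -/
structure IsPseudoTorsionFreeClass (G Q : ModuleCat.{0} R → Prop) : Prop where
  subset : ∀ M : ModuleCat.{0} R, Q M → G M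
  zero_mem : ∀ (M : Type) [AddCommGroup M] [Module R M], Subsingleton M → Mem G M → Mem Q M
  sub_closed : ∀ (M : Type) [AddCommGroup M] [Module R M] (A : Submodule R M),
      IsStrictSub G A → Mem Q M → Mem Q ↥A
  ext_closed : ∀ (A B C : Type) [AddCommGroup A] [Module R A] [AddCommGroup B] [Module R B]
      [AddCommGroup C] [Module R C] (f : A →ₗ[R] B) (g : B →ₗ[R] C),
      Function.Injective f → Function.Surjective g →
      LinearMap.range f = LinearMap.ker g → IsStrictSub G (LinearMap.range f) →
      Mem Q A → Mem Q C → Mem Q B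

/-- `Y` lies in the right perpendicular class `X ⟂`: no nonzero strict morphism
from an object of `X` to `Y`. -/
def MemRightPerp (G X : ModuleCat.{0} R → Prop) (Y : Type) [AddCommGroup Y] [Module R Y] : Prop :=
  Mem G Y ∧ ∀ M : ModuleCat.{0} R, X M → ∀ f : M →ₗ[R] Y, IsStrictMorphism G f → f = 0

/-- `M` lies in the left perpendicular class `⟂ Y`. -/
def MemLeftPerp (G Y : ModuleCat.{0} R → Prop) (M : Type) [AddCommGroup M] [Module R M] : Prop :=
  Mem G M ∧ ∀ N : ModuleCat.{0} R, Y N → ∀ f : M →ₗ[R] N, IsStrictMorphism G f → f = 0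

/-- A pseudo-wide subcategory `W` of `G`. -/
structure IsPseudoWide (G W : ModuleCat.{0} R → Prop) : Prop where
  subset : ∀ M : ModuleCat.{0} R, W M → G M
  zero_mem : ∀ (M : Type) [AddCommGroup M] [Module R M], Subsingleton M → Mem G M → Mem W M
  kic : ∀ (A B : Type) [AddCommGroup A] [Module R A] [AddCommGroup B] [Module R B],
      Mem W A → Mem W B → ∀ f : A →ₗ[R] B, IsStrictMorphism G f →
      Mem W ↥(LinearMap.ker f) ∧ Mem W ↥(LinearMap.range f) ∧
        Mem W (B ⧸ LinearMap.range f)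
  ext_closed : ∀ (A B C : Type) [AddCommGroup A] [Module R A] [AddCommGroup B] [Module R B]
      [AddCommGroup C] [Module R C] (f : A →ₗ[R] B) (g : B →ₗ[R] C),
      Function.Injective f → Function.Surjective g →
      LinearMap.range f = LinearMap.ker g → IsStrictSub G (LinearMap.range f) →
      Mem W A → Mem W C → Mem W B

/-- A stability condition: a real-valued function on modules, invariant under
isomorphism and additive on short exact sequences of finitely generated modules
(this is exactly a functional on `K₀Λ` applied to dimension vectors). -/
structure StabilityCondition (R : Type) [Ring R] : Type 1 where
  val : ModuleCat.{0} R → ℝ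
  iso_inv : ∀ (M N : ModuleCat.{0} R), (↥M ≃ₗ[R] ↥N) → val M = val N
  additive : ∀ (M : ModuleCat.{0} R), Module.Finite R ↥M → ∀ A : Submodule R ↥M,
      val (ModuleCat.of R ↥A) + val (ModuleCat.of R (↥M ⧸ A)) = val M

/-- The value `θ(M)` of a stability condition on a module. -/
def StabilityCondition.app (θ : StabilityCondition R) (M : Type) [AddCommGroup M]
    [Module R M] : ℝ :=
  θ.val (ModuleCat.of R M)

/-- `𝒫(θ)`: objects which are zero, or on which `θ` is positive together with
all nonzero strict quotients. -/
def memP (G : ModuleCat.{0} R → Prop) (θ : StabilityCondition R)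
    (M : Type) [AddCommGroup M] [Module R M] : Prop :=
  Mem G M ∧ (Subsingleton M ∨ (0 < θ.app M ∧
    ∀ A : Submodule R M, IsStrictSub G A → A ≠ ⊤ → 0 < θ.app (M ⧸ A)))

/-- `𝒫̄(θ)`: `θ` is nonnegative on the object and all its strict quotients. -/
def memPbar (G : ModuleCat.{0} R → Prop) (θ : StabilityCondition R)
    (M : Type) [AddCommGroup M] [Module R M] : Prop :=
  Mem G M ∧ 0 ≤ θ.app M ∧ ∀ A : Submodule R M, IsStrictSub G A → 0 ≤ θ.app (M ⧸ A)

/-- `𝒬(θ)`: objects which are zero, or on which `θ` is negative together with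
all nonzero strict subobjects. -/
def memQ (G : ModuleCat.{0} R → Prop) (θ : StabilityCondition R)
    (M : Type) [AddCommGroup M] [Module R M] : Prop :=
  Mem G M ∧ (Subsingleton M ∨ (θ.app M < 0 ∧
    ∀ A : Submodule R M, IsStrictSub G A → A ≠ ⊥ → θ.app ↥A < 0))

/-- `𝒬̄(θ)`: `θ` is nonpositive on the object and all its strict subobjects. -/
def memQbar (G : ModuleCat.{0} R → Prop) (θ : StabilityCondition R)
    (M : Type) [AddCommGroup M] [Module R M] : Prop :=
  Mem G M ∧ θ.app M ≤ 0 ∧ ∀ A : Submodule R M, IsStrictSub G A → θ.app ↥A ≤ 0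

/-- `𝒲(θ)`: θ-semistable objects of `G`; equivalently `θ ∈ D_𝒢(M)`. -/
def memW (G : ModuleCat.{0} R → Prop) (θ : StabilityCondition R)
    (M : Type) [AddCommGroup M] [Module R M] : Prop :=
  Mem G M ∧ θ.app M = 0 ∧ ∀ A : Submodule R M, IsStrictSub G A → θ.app ↥A ≤ 0

/-- `𝒲₀(θ)`: objects of `𝒲(θ)` with no proper nonzero strict subobject in `𝒲(θ)`. -/
def memW0 (G : ModuleCat.{0} R → Prop) (θ : StabilityCondition R)
    (M : Type) [AddCommGroup M] [Module R M] : Prop :=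
  memW G θ M ∧ ∀ A : Submodule R M, IsStrictSub G A → memW G θ ↥A → A = ⊥ ∨ A = ⊤

/-- The linear path `θ_t = t·θ₁ + (1-t)·θ₀` in the stability space. -/
def lineSeg (θ₀ θ₁ : StabilityCondition R) (t : ℝ) : StabilityCondition R where
  val M := t * θ₁.val M + (1 - t) * θ₀.val M
  iso_inv M N e := by (try simp only []); rw [θ₁.iso_inv M N e, θ₀.iso_inv M N e]
  additive M hM A := by
    have h1 := θ₁.additive M hM A
    have h0 := θ₀.additive M hM A
    try simp only []
    linear_combination t * h1 + (1 - t) * h0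

/-- A smooth green path in the stability space. -/
structure IsGreenPath (G : ModuleCat.{0} R → Prop) (θ : ℝ → StabilityCondition R) : Prop where
  smooth : ∀ M : ModuleCat.{0} R, ContDiff ℝ (⊤ : ℕ∞) fun t => (θ t).val M
  green : ∀ (t : ℝ) (M : ModuleCat.{0} R), ¬Subsingleton ↥M → memW G (θ t) ↥M →
      0 < deriv (fun s => (θ s).val M) t
  eventually_pos : ∃ T : ℝ, ∀ t : ℝ, T < t → ∀ M : ModuleCat.{0} R, G M →
      ¬Subsingleton ↥M → 0 < (θ t).val M
  eventually_neg : ∃ T : ℝ, ∀ t : ℝ, t < T → ∀ M : ModuleCat.{0} R, G M →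
      ¬Subsingleton ↥M → (θ t).val M < 0

/-- A filtration `M = c 0 ⊃ c 1 ⊃ ⋯ ⊃ c m = 0` by strict subobjects whose
subquotients `c k / c (k+1)` lie in the slices `W (t k)` with `t` strictly
decreasing. -/
def IsSliceFiltration (G : ModuleCat.{0} R → Prop) {S : Type} [Preorder S]
    (W : S → ModuleCat.{0} R → Prop) {M : Type} [AddCommGroup M] [Module R M]
    (m : ℕ) (t : Fin m → S) (c : Fin (m + 1) → Submodule R M) : Prop :=
  c 0 = ⊤ ∧ c (Fin.last m) = ⊥ ∧ StrictAnti c ∧ StrictAnti t ∧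
  (∀ i, IsStrictSub G (c i)) ∧
  ∀ k : Fin m, W (t k) (ModuleCat.of R
    (↥(c k.castSucc) ⧸ Submodule.comap (c k.castSucc).subtype (c k.succ)))

/-- A strict HN-stratification of `G`: slices are pseudo-wide subcategories
indexed by a totally ordered set, with no nonzero strict morphisms backwards,
such that every object of `G` has a strict filtration with subquotients in
decreasing slices. -/
structure IsHNStratification (G : ModuleCat.{0} R → Prop) {S : Type} [LinearOrder S]
    (W : S → ModuleCat.{0} R → Prop) : Prop where
  wide : ∀ s : S, IsPseudoWide G (W s)
  no_backward : ∀ s₀ s₁ : S, s₀ < s₁ → ∀ X Y : ModuleCat.{0} R, W s₀ X → W s₁ Y →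
      ∀ f : X →ₗ[R] Y, IsStrictMorphism G f → f = 0
  filt : ∀ M : ModuleCat.{0} R, G M → ∃ (m : ℕ) (t : Fin m → S)
      (c : Fin (m + 1) → Submodule R ↥M), IsSliceFiltration G W m t c

section Infra

variable {R : Type} [Ring R] {G : ModuleCat.{0} R → Prop} {θ : StabilityCondition R}

lemma mem_iso (hG : IsTorsionClass G) {M N : Type} [AddCommGroup M] [Module R M]
    [AddCommGroup N] [Module R N] (e : M ≃ₗ[R] N) (h : Mem G M) : Mem G N :=
  hG.iso_closed M N e h

lemma theta_iso (θ : StabilityCondition R) {M N : Type} [AddCommGroup M] [Module R M]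
    [AddCommGroup N] [Module R N] (e : M ≃ₗ[R] N) : θ.app M = θ.app N :=
  θ.iso_inv (ModuleCat.of R M) (ModuleCat.of R N) e

lemma theta_add (θ : StabilityCondition R) {M : Type} [AddCommGroup M] [Module R M]
    [h : Module.Finite R M] (A : Submodule R M) :
    θ.app ↥A + θ.app (M ⧸ A) = θ.app M :=
  θ.additive (ModuleCat.of R M) h A

lemma theta_subsingleton (θ : StabilityCondition R) {M : Type} [AddCommGroup M] [Module R M]
    [Module.Finite R M] (h : Subsingleton M) : θ.app M = 0 := by
  have h1 := theta_add θ (⊤ : Submodule R M)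
  have e1 : (↥(⊤ : Submodule R M)) ≃ₗ[R] M := Submodule.topEquiv
  have e2 : (M ⧸ (⊤ : Submodule R M)) ≃ₗ[R] M := LinearEquiv.ofSubsingleton _ _
  rw [theta_iso θ e1, theta_iso θ e2] at h1
  linarith

lemma theta_bot (θ : StabilityCondition R) {M : Type} [AddCommGroup M] [Module R M] :
    θ.app ↥(⊥ : Submodule R M) = 0 :=
  theta_subsingleton θ inferInstance

/-- The canonical iso `S ⧸ (S ∩ ker f) ≃ f(S)`. -/
noncomputable def mapQuotEquiv {M N : Type} [AddCommGroup M] [Module R M]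
    [AddCommGroup N] [Module R N] (f : M →ₗ[R] N) (S : Submodule R M) :
    (↥S ⧸ Submodule.comap S.subtype (LinearMap.ker f)) ≃ₗ[R] ↥(S.map f) :=
  (Submodule.quotEquivOfEq _ _ (by rw [LinearMap.ker_comp])).trans
    ((f.comp S.subtype).quotKerEquivRange.trans
      (LinearEquiv.ofEq _ _ (by rw [LinearMap.range_comp, Submodule.range_subtype])))

lemma mem_map (hG : IsTorsionClass G) {M N : Type} [AddCommGroup M] [Module R M]
    [AddCommGroup N] [Module R N] (f : M →ₗ[R] N) {S : Submodule R M}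
    (h : Mem G ↥S) : Mem G ↥(S.map f) :=
  mem_iso hG (mapQuotEquiv f S) (hG.quot_closed ↥S _ h)

lemma theta_map_eq (θ : StabilityCondition R) {M N : Type} [AddCommGroup M] [Module R M]
    [AddCommGroup N] [Module R N] (f : M →ₗ[R] N) (S : Submodule R M)
    [Module.Finite R ↥S] :
    θ.app ↥(S.map f) = θ.app ↥S - θ.app ↥(Submodule.comap S.subtype (LinearMap.ker f)) := by
  have h := theta_add θ (Submodule.comap S.subtype (LinearMap.ker f))
  rw [← theta_iso θ (mapQuotEquiv f S)]
  linarith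

lemma theta_map_inj (θ : StabilityCondition R) {M N : Type} [AddCommGroup M] [Module R M]
    [AddCommGroup N] [Module R N] {f : M →ₗ[R] N} (hf : Function.Injective f)
    (S : Submodule R M) : θ.app ↥(S.map f) = θ.app ↥S :=
  (theta_iso θ (Submodule.equivMapOfInjective f hf S)).symm

lemma theta_comap_subtype (θ : StabilityCondition R) {M : Type} [AddCommGroup M] [Module R M]
    (N A : Submodule R M) :
    θ.app ↥(Submodule.comap N.subtype A) = θ.app ↥(N ⊓ A) := by
  rw [← theta_map_inj θ N.injective_subtype, Submodule.map_comap_subtype]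

lemma map_inf_comap_eq {M N : Type} [AddCommGroup M] [Module R M]
    [AddCommGroup N] [Module R N] (f : M →ₗ[R] N) (S : Submodule R M) (T : Submodule R N) :
    Submodule.map f (S ⊓ Submodule.comap f T) = Submodule.map f S ⊓ T := by
  ext x
  simp only [Submodule.mem_map, Submodule.mem_inf, Submodule.mem_comap]
  constructor
  · rintro ⟨y, ⟨hy1, hy2⟩, rfl⟩; exact ⟨⟨y, hy1, rfl⟩, hy2⟩
  · rintro ⟨⟨y, hy1, rfl⟩, hx⟩; exact ⟨y, ⟨hy1, hx⟩, rfl⟩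

lemma strict_bot (hG : IsTorsionClass G) {M : Type} [AddCommGroup M] [Module R M] :
    IsStrictSub G (⊥ : Submodule R M) := by
  constructor
  · exact hG.zero_mem _ inferInstance
  · intro B' _
    rw [bot_inf_eq]
    exact hG.zero_mem _ inferInstance

lemma strict_top (hG : IsTorsionClass G) {M : Type} [AddCommGroup M] [Module R M]
    (h : Mem G M) : IsStrictSub G (⊤ : Submodule R M) := by
  constructor
  · exact mem_iso hG Submodule.topEquiv.symm h
  · intro B' hB'
    rw [top_inf_eq]
    exact hB'

lemma mem_of_inf_ker_of_map (hG : IsTorsionClass G) {M N : Type} [AddCommGroup M] [Module R M]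
    [AddCommGroup N] [Module R N] (f : M →ₗ[R] N) (S : Submodule R M)
    (h1 : Mem G ↥(S ⊓ LinearMap.ker f)) (h2 : Mem G ↥(S.map f)) : Mem G ↥S := by
  set D := Submodule.comap S.subtype (LinearMap.ker f) with hD
  refine hG.ext_closed ↥(S ⊓ LinearMap.ker f) ↥S (↥S ⧸ D)
    (Submodule.inclusion inf_le_left) D.mkQ (Submodule.inclusion_injective _)
    D.mkQ_surjective ?_ h1 (mem_iso hG (mapQuotEquiv f S).symm h2)
  rw [Submodule.range_inclusion, Submodule.ker_mkQ, hD]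
  rw [Submodule.comap_inf, Submodule.comap_subtype_self, top_inf_eq]

lemma strict_comap_subtype (hG : IsTorsionClass G) {M : Type} [AddCommGroup M] [Module R M]
    {A N : Submodule R M} (hA : IsStrictSub G A) (hN : Mem G ↥N) :
    IsStrictSub G (Submodule.comap N.subtype A) := by
  have key : ∀ B'' : Submodule R ↥N, Mem G ↥B'' →
      Mem G ↥(Submodule.comap N.subtype A ⊓ B'') := by
    intro B'' hB''
    have e1 : Submodule.map N.subtype (Submodule.comap N.subtype A ⊓ B'')
        = A ⊓ Submodule.map N.subtype B'' := by
      rw [Submodule.map_inf _ N.injective_subtype, Submodule.map_comap_subtype,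
        inf_comm N A, inf_assoc]
      congr 1
      rw [inf_eq_right]
      exact Submodule.map_subtype_le N B''
    have hmem : Mem G ↥(A ⊓ Submodule.map N.subtype B'') :=
      hA.2 _ (mem_iso hG (Submodule.equivMapOfInjective _ N.injective_subtype B'') hB'')
    have e2 : (↥(Submodule.comap N.subtype A ⊓ B'')) ≃ₗ[R]
        ↥(A ⊓ Submodule.map N.subtype B'') :=
      (Submodule.equivMapOfInjective _ N.injective_subtype _).trans (LinearEquiv.ofEq _ _ e1)
    exact mem_iso hG e2.symm hmem
  constructor
  · have e : (↥(Submodule.comap N.subtype A)) ≃ₗ[R] ↥(N ⊓ A) :=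
      (Submodule.equivMapOfInjective _ N.injective_subtype _).trans
        (LinearEquiv.ofEq _ _ (Submodule.map_comap_subtype N A))
    exact mem_iso hG e.symm (by rw [inf_comm]; exact hA.2 N hN)
  · exact key

lemma strict_map_subtype (hG : IsTorsionClass G) {M : Type} [AddCommGroup M] [Module R M]
    {N : Submodule R M} (hN : IsStrictSub G N) {A : Submodule R ↥N}
    (hA : IsStrictSub G A) : IsStrictSub G (A.map N.subtype) := by
  constructor
  · exact mem_iso hG (Submodule.equivMapOfInjective _ N.injective_subtype A) hA.1
  · intro B hB
    have hcB : Mem G ↥(Submodule.comap N.subtype B) := by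
      have e : (↥(Submodule.comap N.subtype B)) ≃ₗ[R] ↥(N ⊓ B) :=
        (Submodule.equivMapOfInjective _ N.injective_subtype _).trans
          (LinearEquiv.ofEq _ _ (Submodule.map_comap_subtype N B))
      exact mem_iso hG e.symm (hN.2 B hB)
    have h1 : Mem G ↥(A ⊓ Submodule.comap N.subtype B) := hA.2 _ hcB
    have e1 : Submodule.map N.subtype (A ⊓ Submodule.comap N.subtype B)
        = A.map N.subtype ⊓ B := map_inf_comap_eq _ _ _
    have e2 : (↥(A ⊓ Submodule.comap N.subtype B)) ≃ₗ[R] ↥(A.map N.subtype ⊓ B) :=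
      (Submodule.equivMapOfInjective _ N.injective_subtype _).trans (LinearEquiv.ofEq _ _ e1)
    exact mem_iso hG e2 h1

lemma mem_comap_fib (hG : IsTorsionClass G) {M N : Type} [AddCommGroup M] [Module R M]
    [AddCommGroup N] [Module R N] {g : M →ₗ[R] N} (hg : Function.Surjective g)
    (hker : Mem G ↥(LinearMap.ker g)) {C' : Submodule R N} (hC' : Mem G ↥C') :
    Mem G ↥(Submodule.comap g C') := by
  refine mem_of_inf_ker_of_map hG g _ ?_ ?_
  · have h : Submodule.comap g C' ⊓ LinearMap.ker g = LinearMap.ker g := by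
      rw [inf_eq_right]
      exact fun x hx => by simp [LinearMap.mem_ker.mp hx, Submodule.zero_mem]
    rw [h]; exact hker
  · rw [Submodule.map_comap_eq_of_surjective hg]; exact hC'

lemma strict_comap_fib (hG : IsTorsionClass G) {M N : Type} [AddCommGroup M] [Module R M]
    [AddCommGroup N] [Module R N] {g : M →ₗ[R] N} (hg : Function.Surjective g)
    (hker : IsStrictSub G (LinearMap.ker g)) {C' : Submodule R N}
    (hC' : IsStrictSub G C') : IsStrictSub G (Submodule.comap g C') := by
  constructor
  · exact mem_comap_fib hG hg hker.1 hC'.1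
  · intro B hB
    refine mem_of_inf_ker_of_map hG g _ ?_ ?_
    · have h : Submodule.comap g C' ⊓ B ⊓ LinearMap.ker g = LinearMap.ker g ⊓ B := by
        rw [inf_right_comm, inf_comm (Submodule.comap g C')]
        congr 1
        rw [inf_eq_left]
        exact fun x hx => by simp [LinearMap.mem_ker.mp hx, Submodule.zero_mem]
      rw [h]; exact hker.2 B hB
    · have h : Submodule.map g (Submodule.comap g C' ⊓ B) = C' ⊓ Submodule.map g B := by
        rw [inf_comm (Submodule.comap g C'), map_inf_comap_eq, inf_comm]
      rw [h]; exact hC'.2 _ (mem_map hG g hB)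

lemma strict_map_fib (hG : IsTorsionClass G) {M N : Type} [AddCommGroup M] [Module R M]
    [AddCommGroup N] [Module R N] {g : M →ₗ[R] N} (hg : Function.Surjective g)
    (hker : IsStrictSub G (LinearMap.ker g)) {S : Submodule R M}
    (hS : IsStrictSub G S) : IsStrictSub G (S.map g) := by
  constructor
  · exact mem_map hG g hS.1
  · intro C' hC'
    rw [← map_inf_comap_eq]
    exact mem_map hG g (hS.2 _ (mem_comap_fib hG hg hker.1 hC'))

end Infra
section Main

variable {R : Type} [Ring R] {G : ModuleCat.{0} R → Prop} {θ : StabilityCondition R}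

lemma le_of_P_W (hG : IsTorsionClass G)
    (hfin : ∀ M : ModuleCat.{0} R, G M → Module.Finite R ↥M)
    {M : Type} [AddCommGroup M] [Module R M]
    {N N' : Submodule R M} (hN : IsStrictSub G N) (hNP : memP G θ ↥N)
    (hN' : IsStrictSub G N') (hW : memW G θ (M ⧸ N')) : N ≤ N' := by
  rcases hNP.2 with h | ⟨hpos, hquot⟩
  · intro x hx
    have h0 : (⟨x, hx⟩ : ↥N) = 0 := Subsingleton.elim _ _
    have h1 : x = (0 : M) := congrArg Subtype.val h0
    rw [h1]; exact N'.zero_mem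
  · set D := Submodule.comap N.subtype N' with hD
    by_cases hDtop : D = ⊤
    · exact Submodule.comap_subtype_eq_top.mp hDtop
    · exfalso
      haveI : Module.Finite R ↥N := hfin _ hN.1
      have hDstrict : IsStrictSub G D := strict_comap_subtype hG hN' hN.1
      have h1 : 0 < θ.app (↥N ⧸ D) := hquot D hDstrict hDtop
      have hker : Submodule.comap N.subtype (LinearMap.ker N'.mkQ) = D := by
        rw [Submodule.ker_mkQ]
      have h2 : θ.app ↥(N.map N'.mkQ) = θ.app (↥N ⧸ D) := by
        rw [theta_map_eq θ N'.mkQ N, hker]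
        have := theta_add θ D
        linarith
      have hmapstrict : IsStrictSub G (N.map N'.mkQ) :=
        strict_map_fib hG N'.mkQ_surjective
          (by rw [Submodule.ker_mkQ]; exact hN') hN
      have h3 : θ.app ↥(N.map N'.mkQ) ≤ 0 := hW.2.2 _ hmapstrict
      linarith

lemma main_exists_unique (hart : IsArtinianRing R) (hG : IsTorsionClass G)
    (hfin : ∀ M : ModuleCat.{0} R, G M → Module.Finite R ↥M)
    (θ : StabilityCondition R) (M : Type) [AddCommGroup M] [Module R M]
    (hM : memPbar G θ M) :
    ∃! M0 : Submodule R M, IsStrictSub G M0 ∧ memP G θ ↥M0 ∧ memW G θ (M ⧸ M0) := by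
  haveI : Module.Finite R M := hfin _ hM.1
  haveI : IsArtinian R M := inferInstance
  set S : Set (Submodule R M) := {A | IsStrictSub G A ∧ θ.app (M ⧸ A) = 0} with hS
  have htop : (⊤ : Submodule R M) ∈ S := by
    refine ⟨strict_top hG hM.1, ?_⟩
    haveI : Subsingleton (M ⧸ (⊤ : Submodule R M)) :=
      Submodule.Quotient.subsingleton_iff.mpr rfl
    exact theta_subsingleton θ inferInstance
  obtain ⟨M0, hM0S, hmin⟩ := IsArtinian.set_has_minimal S ⟨⊤, htop⟩
  obtain ⟨hM0strict, hM0q⟩ := hM0S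
  haveI : Module.Finite R ↥M0 := hfin _ hM0strict.1
  have hθM0 : θ.app ↥M0 = θ.app M := by
    have := theta_add θ M0; linarith
  have hmin' : ∀ A : Submodule R M, IsStrictSub G A → A ≤ M0 → A ≠ M0 →
      θ.app (M ⧸ A) ≠ 0 := by
    intro A hA hle hne h0
    exact hmin A ⟨hA, h0⟩ (lt_of_le_of_ne hle hne)
  have hW : memW G θ (M ⧸ M0) := by
    refine ⟨hG.quot_closed M M0 hM.1, hM0q, ?_⟩
    intro C' hC'
    set C := Submodule.comap M0.mkQ C' with hC
    have hCstrict : IsStrictSub G C := strict_comap_fib hG M0.mkQ_surjective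
      (by rw [Submodule.ker_mkQ]; exact hM0strict) hC'
    haveI : Module.Finite R ↥C := hfin _ hCstrict.1
    have hθC : θ.app ↥C ≤ θ.app M := by
      have h1 := theta_add θ C
      have h2 := hM.2.2 C hCstrict
      linarith
    have hM0leC : M0 ≤ C := by
      intro x hx
      have : M0.mkQ x ∈ C' := by
        have h0 : M0.mkQ x = 0 := (Submodule.Quotient.mk_eq_zero M0).mpr hx
        rw [h0]; exact C'.zero_mem
      exact this
    have hmapC : C.map M0.mkQ = C' :=
      Submodule.map_comap_eq_of_surjective M0.mkQ_surjective C'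
    have h3 : θ.app ↥C' = θ.app ↥C -
        θ.app ↥(Submodule.comap C.subtype (LinearMap.ker M0.mkQ)) := by
      rw [← hmapC, theta_map_eq θ M0.mkQ C]
    have h4 : θ.app ↥(Submodule.comap C.subtype (LinearMap.ker M0.mkQ)) = θ.app ↥M0 := by
      rw [Submodule.ker_mkQ, theta_comap_subtype θ C M0, inf_eq_right.mpr hM0leC]
    rw [h3, h4, hθM0]
    linarith
  have hquotpos : ∀ A : Submodule R ↥M0, IsStrictSub G A → A ≠ ⊤ →
      0 < θ.app (↥M0 ⧸ A) := by
    intro A hA hne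
    set A' := A.map M0.subtype with hA'def
    have hA'strict : IsStrictSub G A' := strict_map_subtype hG hM0strict hA
    have hA'le : A' ≤ M0 := Submodule.map_subtype_le M0 A
    have hA'ne : A' ≠ M0 := by
      intro h
      apply hne
      have := congrArg (Submodule.comap M0.subtype) h
      rwa [Submodule.comap_map_eq_of_injective M0.injective_subtype,
        Submodule.comap_subtype_self] at this
    haveI : Module.Finite R ↥A := hfin _ hA.1
    haveI : Module.Finite R ↥A' := hfin _ hA'strict.1
    have hq1 : θ.app (↥M0 ⧸ A) = θ.app ↥M0 - θ.app ↥A := by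
      have := theta_add θ A; linarith
    have hq2 : θ.app (M ⧸ A') = θ.app M - θ.app ↥A' := by
      have := theta_add θ A'; linarith
    have hAA' : θ.app ↥A' = θ.app ↥A := theta_map_inj θ M0.injective_subtype A
    have hge : 0 ≤ θ.app (M ⧸ A') := hM.2.2 A' hA'strict
    have hne0 : θ.app (M ⧸ A') ≠ 0 := hmin' A' hA'strict hA'le hA'ne
    have hlt : 0 < θ.app (M ⧸ A') := lt_of_le_of_ne hge (Ne.symm hne0)
    rw [hq1, hθM0]
    rw [hq2] at hlt
    linarith
  have hP : memP G θ ↥M0 := by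
    refine ⟨hM0strict.1, ?_⟩
    by_cases hs : Subsingleton ↥M0
    · exact Or.inl hs
    · refine Or.inr ⟨?_, hquotpos⟩
      haveI : Nontrivial ↥M0 := not_subsingleton_iff_nontrivial.mp hs
      have h0 := hquotpos ⊥ (strict_bot hG) bot_ne_top
      have he : θ.app (↥M0 ⧸ (⊥ : Submodule R ↥M0)) = θ.app ↥M0 :=
        theta_iso θ (Submodule.quotEquivOfEqBot ⊥ rfl)
      linarith
  refine ⟨M0, ⟨hM0strict, hP, hW⟩, ?_⟩
  intro N ⟨hNs, hNP, hNW⟩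
  exact le_antisymm (le_of_P_W hG hfin hNs hNP hM0strict hW)
    (le_of_P_W hG hfin hM0strict hP hNs hNW)

end Main
section Main2

variable {R : Type} [Ring R] {G : ModuleCat.{0} R → Prop} {θ : StabilityCondition R}

lemma memW_iso (hG : IsTorsionClass G) {X Y : Type} [AddCommGroup X] [Module R X]
    [AddCommGroup Y] [Module R Y] (e : X ≃ₗ[R] Y) (h : memW G θ X) : memW G θ Y := by
  refine ⟨mem_iso hG e h.1, by rw [← theta_iso θ e]; exact h.2.1, ?_⟩
  intro A hA
  have hkb : IsStrictSub G (LinearMap.ker e.symm.toLinearMap) := by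
    rw [LinearMap.ker_eq_bot.mpr e.symm.injective]
    exact strict_bot hG
  have hstrict : IsStrictSub G (A.map e.symm.toLinearMap) :=
    strict_map_fib hG e.symm.surjective hkb hA
  have h2 := h.2.2 _ hstrict
  rwa [theta_map_inj θ e.symm.injective A] at h2

lemma part2 (hart : IsArtinianRing R) (hG : IsTorsionClass G)
    (hfin : ∀ M : ModuleCat.{0} R, G M → Module.Finite R ↥M)
    (θ : StabilityCondition R) (X : Type) [AddCommGroup X] [Module R X] :
    memW G θ X ↔ (memPbar G θ X ∧
      MemRightPerp G (fun N : ModuleCat.{0} R => memP G θ ↥N) X) := by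
  constructor
  · intro hX
    haveI : Module.Finite R X := hfin _ hX.1
    refine ⟨⟨hX.1, hX.2.1.ge, ?_⟩, hX.1, ?_⟩
    · intro A hA
      have h1 := theta_add θ A
      have h2 := hX.2.2 A hA
      have h3 := hX.2.1
      linarith
    · intro Mc hMc f hf
      rcases hMc.2 with hsub | ⟨hpos, hquot⟩
      · refine LinearMap.ext fun x => ?_
        rw [Subsingleton.elim x 0, map_zero, map_zero]
      · by_cases hker : LinearMap.ker f = ⊤
        · refine LinearMap.ext fun x => ?_
          have hx : x ∈ LinearMap.ker f := by rw [hker]; trivial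
          simpa using LinearMap.mem_ker.mp hx
        · exfalso
          haveI : Module.Finite R ↥Mc := hfin _ hMc.1
          have h1 : 0 < θ.app (↥Mc ⧸ LinearMap.ker f) := hquot _ hf.1 hker
          have h2 : θ.app ↥(LinearMap.range f) ≤ 0 := hX.2.2 _ hf.2
          have he : θ.app (↥Mc ⧸ LinearMap.ker f) = θ.app ↥(LinearMap.range f) :=
            theta_iso θ f.quotKerEquivRange
          linarith
  · rintro ⟨hXbar, hXG, hperp⟩
    obtain ⟨X0, ⟨hX0s, hX0P, hX0W⟩, -⟩ := main_exists_unique hart hG hfin θ X hXbar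
    have hzero : (X0.subtype : ↥X0 →ₗ[R] X) = 0 := by
      refine hperp (ModuleCat.of R ↥X0) hX0P _ ⟨?_, ?_⟩
      · rw [Submodule.ker_subtype]; exact strict_bot hG
      · rw [Submodule.range_subtype]; exact hX0s
    have hbot : X0 = ⊥ := by
      rw [Submodule.eq_bot_iff]
      intro x hx
      have h0 : X0.subtype ⟨x, hx⟩ = 0 := by rw [hzero]; rfl
      simpa using h0
    rw [hbot] at hX0W
    exact memW_iso hG (Submodule.quotEquivOfEqBot ⊥ rfl) hX0W

lemma part3i (hG : IsTorsionClass G)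
    (hfin : ∀ M : ModuleCat.{0} R, G M → Module.Finite R ↥M)
    (θ : StabilityCondition R) :
    IsPseudoTorsionClass G (fun M : ModuleCat.{0} R => memPbar G θ ↥M) := by
  constructor
  · intro M hM
    exact hM.1
  · intro M _ _ hss hGM
    haveI : Module.Finite R M := hfin _ hGM
    show memPbar G θ M
    refine ⟨hGM, (theta_subsingleton θ hss).ge, ?_⟩
    intro A hA
    haveI : Subsingleton (M ⧸ A) :=
      ⟨fun a b => by
        obtain ⟨x, rfl⟩ := A.mkQ_surjective a
        obtain ⟨y, rfl⟩ := A.mkQ_surjective b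
        rw [Subsingleton.elim x y]⟩
    exact (theta_subsingleton θ inferInstance).ge
  · intro M _ _ A hA hM
    replace hM : memPbar G θ M := hM
    show memPbar G θ (M ⧸ A)
    haveI : Module.Finite R M := hfin _ hM.1
    refine ⟨hG.quot_closed M A hM.1, hM.2.2 A hA, ?_⟩
    intro B' hB'
    set C := Submodule.comap A.mkQ B' with hCdef
    have hCs : IsStrictSub G C := strict_comap_fib hG A.mkQ_surjective
      (by rw [Submodule.ker_mkQ]; exact hA) hB'
    have hle : A ≤ C := by
      intro x hx
      have h0 : A.mkQ x = 0 := (Submodule.Quotient.mk_eq_zero A).mpr hx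
      show A.mkQ x ∈ B'
      rw [h0]; exact B'.zero_mem
    have hmap : C.map A.mkQ = B' :=
      Submodule.map_comap_eq_of_surjective A.mkQ_surjective B'
    have he : ((M ⧸ A) ⧸ B') ≃ₗ[R] (M ⧸ C) :=
      (Submodule.quotEquivOfEq _ _ hmap.symm).trans
        (Submodule.quotientQuotientEquivQuotient A C hle)
    rw [theta_iso θ he]
    exact hM.2.2 C hCs
  · intro A B C _ _ _ _ _ _ f g hfinj hgsurj hfg hstrict hA hC
    replace hA : memPbar G θ A := hA
    replace hC : memPbar G θ C := hC
    show memPbar G θ B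
    haveI : Module.Finite R A := hfin _ hA.1
    haveI : Module.Finite R C := hfin _ hC.1
    have hGB : Mem G B := hG.ext_closed A B C f g hfinj hgsurj hfg hA.1 hC.1
    haveI : Module.Finite R B := hfin _ hGB
    have eA : θ.app ↥(LinearMap.range f) = θ.app A :=
      theta_iso θ (LinearEquiv.ofInjective f hfinj).symm
    have eC : θ.app (B ⧸ LinearMap.range f) = θ.app C := by
      rw [hfg]; exact theta_iso θ (g.quotKerEquivOfSurjective hgsurj)
    have hB := theta_add θ (LinearMap.range f)
    refine ⟨hGB, by linarith [hA.2.1, hC.2.1], ?_⟩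
    intro S hSstrict
    haveI : Module.Finite R ↥S := hfin _ hSstrict.1
    have htS : θ.app ↥(Submodule.comap S.subtype (LinearMap.ker g)) +
        θ.app ↥(S.map g) = θ.app ↥S := by
      have := theta_map_eq θ g S; linarith
    have hmapstrict : IsStrictSub G (S.map g) := strict_map_fib hG hgsurj
      (by rw [← hfg]; exact hstrict) hSstrict
    have h1 : θ.app ↥(S.map g) ≤ θ.app C := by
      have := theta_add θ (S.map g)
      have := hC.2.2 _ hmapstrict
      linarith
    set T := Submodule.comap f S with hT
    have hTstrict : IsStrictSub G T := by
      constructor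
      · have e : Submodule.map f T = LinearMap.range f ⊓ S := Submodule.map_comap_eq f S
        have hm : Mem G ↥(S ⊓ LinearMap.range f) := hSstrict.2 _ hstrict.1
        refine mem_iso hG ?_ hm
        exact (LinearEquiv.ofEq _ _ (by rw [inf_comm]; exact e.symm)).trans
          (Submodule.equivMapOfInjective f hfinj T).symm
      · intro B'' hB''
        have e1 : Submodule.map f (T ⊓ B'') = S ⊓ Submodule.map f B'' := by
          rw [Submodule.map_inf f hfinj, Submodule.map_comap_eq,
            inf_comm (LinearMap.range f) S, inf_assoc]
          congr 1
          rw [inf_eq_right]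
          exact LinearMap.map_le_range
        have h2 : Mem G ↥(S ⊓ Submodule.map f B'') := hSstrict.2 _ (mem_map hG f hB'')
        exact mem_iso hG ((Submodule.equivMapOfInjective f hfinj _).trans
          (LinearEquiv.ofEq _ _ e1)).symm h2
    haveI : Module.Finite R ↥T := hfin _ hTstrict.1
    have h3 : θ.app ↥T ≤ θ.app A := by
      have := theta_add θ T
      have := hA.2.2 T hTstrict
      linarith
    have h4 : θ.app ↥(Submodule.comap S.subtype (LinearMap.ker g)) = θ.app ↥T := by
      rw [theta_comap_subtype θ S (LinearMap.ker g), ← hfg,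
        ← theta_map_inj θ hfinj T, Submodule.map_comap_eq, inf_comm]
    have h5 : θ.app (B ⧸ S) = θ.app B - θ.app ↥S := by
      have := theta_add θ S; linarith
    linarith [hB, eA, eC, htS, h1, h3, h4, h5]

lemma part3ii (hart : IsArtinianRing R) (hG : IsTorsionClass G)
    (hfin : ∀ M : ModuleCat.{0} R, G M → Module.Finite R ↥M)
    (θ : StabilityCondition R) :
    ∀ P' : ModuleCat.{0} R → Prop, IsPseudoTorsionClass G P' →
      (∀ N : ModuleCat.{0} R, memP G θ ↥N → P' N) →
      (∀ N : ModuleCat.{0} R, memW G θ ↥N → P' N) →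
      ∀ N : ModuleCat.{0} R, memPbar G θ ↥N → P' N := by
  intro P' hP' hP hW N hN
  obtain ⟨M0, ⟨hM0s, hM0P, hM0W⟩, -⟩ := main_exists_unique hart hG hfin θ ↥N hN
  have h1 : Mem P' ↥M0 := hP (ModuleCat.of R ↥M0) hM0P
  have h2 : Mem P' (↥N ⧸ M0) := hW (ModuleCat.of R (↥N ⧸ M0)) hM0W
  have h3 : Mem P' ↥N := hP'.ext_closed ↥M0 ↥N (↥N ⧸ M0) M0.subtype M0.mkQ
    M0.injective_subtype M0.mkQ_surjective
    (by rw [Submodule.range_subtype, Submodule.ker_mkQ])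
    (by rw [Submodule.range_subtype]; exact hM0s) h1 h2
  exact h3

end Main2
theorem statement_15 (k : Type) [Field k] [Algebra k R] [FiniteDimensional k R]
    (G : ModuleCat.{0} R → Prop) (hG : IsTorsionClass G)
    (hfin : ∀ M : ModuleCat.{0} R, G M → Module.Finite R ↥M)
    (θ : StabilityCondition R) :
    (∀ (M : Type) [AddCommGroup M] [Module R M], memPbar G θ M →
      ∃! M0 : Submodule R M, IsStrictSub G M0 ∧ memP G θ ↥M0 ∧ memW G θ (M ⧸ M0)) ∧
    (∀ (X : Type) [AddCommGroup X] [Module R X],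
      (memW G θ X ↔ (memPbar G θ X ∧
        MemRightPerp G (fun N : ModuleCat.{0} R => memP G θ ↥N) X))) ∧
    (IsPseudoTorsionClass G (fun M : ModuleCat.{0} R => memPbar G θ ↥M) ∧
      ∀ P' : ModuleCat.{0} R → Prop, IsPseudoTorsionClass G P' →
        (∀ N : ModuleCat.{0} R, memP G θ ↥N → P' N) →
        (∀ N : ModuleCat.{0} R, memW G θ ↥N → P' N) →
        ∀ N : ModuleCat.{0} R, memPbar G θ ↥N → P' N) := by
  have hart : IsArtinianRing R := isArtinian_of_tower k (inferInstance : IsArtinian k R)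
  exact ⟨fun M _ _ hM => main_exists_unique hart hG hfin θ M hM,
    fun X _ _ => part2 hart hG hfin θ X,
    part3i hG hfin θ, part3ii hart hG hfin θ⟩

end PaperTC
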